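/- Let X and Y be Banach spaces, where X contains a closed subspace isomorphic to c₀ and the dual unit ball of Y is weak* sequentially compact, and let R : X → Y be a bounded linear operator which is bounded below by η > 0 (i.e., ‖R x‖ ≥ η·‖x‖ for all x ∈ X). Then for every C > 1: the range of R contains a closed subspace Z which is C-complemented in Y (there is a bounded projection of Y onto Z of norm at most C) and C-isomorphic to c₀; and there exist bounded linear operators U : Y → c₀ and V : c₀ → X such that U∘R∘V = I_{c₀} and ‖U‖·‖V‖ ≤ C²/η. -/

import Mathlib

/-!
Composing `R` with the copy of `c₀` in `X` gives a bounded-below `T : c₀ → Y`. James' distortion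
argument, applied to the suprema of `‖T b‖` over finitely supported `b` of norm `≤ 1` living on
`[m, ∞)` (these decrease in `m`), yields disjoint blocks `x k` such that `y k = T (x k)` satisfies
`‖a n‖ ≤ ‖∑ a k • y k‖ ≤ C · max ‖a k‖`. The lower estimate gives biorthogonal functionals
`f n` of norm `≤ 1`; weak* sequential compactness of the dual ball makes `f ∘ ρ` weak* convergent,
so `h k = (f (ρ (2k)) - f (ρ (2k+1))) / 2` is weak* null, has norm `≤ 1` and is biorthogonal to
`z k = y (ρ (2k)) - y (ρ (2k+1))`, which still satisfies the upper estimate. Hence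
`U w = (h k w)ₖ` is an operator `Y → c₀` of norm `≤ 1`, and it is a left inverse of the operator
`a ↦ ∑ a k • z k` of norm `≤ C`, which factors through `R`; the range of the latter is the
required complemented copy of `c₀`.
-/

open scoped ZeroAtInfty
open Filter

namespace ZeroAtInftyContinuousMap

variable {α β : Type*} [TopologicalSpace α]

theorem coe_sum [AddCommMonoid β] [TopologicalSpace β] [ContinuousAdd β] {ι : Type*}
    (s : Finset ι) (f : ι → C₀(α, β)) : ⇑(∑ i ∈ s, f i) = ∑ i ∈ s, ⇑(f i) :=
  map_sum (⟨⟨(⇑), coe_zero⟩, coe_add⟩ : C₀(α, β) →+ (α → β)) f s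

theorem norm_apply_le [SeminormedAddCommGroup β] (f : C₀(α, β)) (x : α) : ‖f x‖ ≤ ‖f‖ :=
  norm_toBCF_eq_norm (f := f) ▸ f.toBCF.norm_coe_le_norm x

theorem norm_le [SeminormedAddCommGroup β] {f : C₀(α, β)} {C : ℝ} (hC : 0 ≤ C) :
    ‖f‖ ≤ C ↔ ∀ x, ‖f x‖ ≤ C :=
  norm_toBCF_eq_norm (f := f) ▸ BoundedContinuousFunction.norm_le hC

def ofTendstoAtTop [TopologicalSpace β] [Zero β] (f : ℕ → β) (hf : Tendsto f atTop (nhds 0)) :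
    C₀(ℕ, β) :=
  ⟨⟨f, continuous_of_discreteTopology⟩, by rwa [cocompact_eq_cofinite, Nat.cofinite_eq_atTop]⟩

@[simp]
theorem ofTendstoAtTop_apply [TopologicalSpace β] [Zero β] (f : ℕ → β)
    (hf : Tendsto f atTop (nhds 0)) (n : ℕ) : ofTendstoAtTop f hf n = f n :=
  rfl

theorem tendsto_atTop [TopologicalSpace β] [Zero β] (f : C₀(ℕ, β)) :
    Tendsto f atTop (nhds 0) := by
  simpa [cocompact_eq_cofinite, Nat.cofinite_eq_atTop] using f.zero_at_infty'

def single [TopologicalSpace β] [Zero β] (m : ℕ) (c : β) : C₀(ℕ, β) :=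
  ofTendstoAtTop (Pi.single m c) <| tendsto_const_nhds.congr' <| by
    filter_upwards [eventually_gt_atTop m] with n hn
    exact (Pi.single_eq_of_ne hn.ne' (M := fun _ => β) c).symm

theorem coe_single [TopologicalSpace β] [Zero β] (m : ℕ) (c : β) :
    ⇑(single m c) = Pi.single m c :=
  rfl

theorem norm_single [SeminormedAddCommGroup β] (m : ℕ) (c : β) : ‖single m c‖ = ‖c‖ := by
  refine le_antisymm ((norm_le (norm_nonneg c)).2 fun n => ?_) ?_
  · rcases eq_or_ne n m with rfl | hn
    · simp [coe_single]
    · simp [coe_single, Pi.single_eq_of_ne hn]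
  · simpa [coe_single] using norm_apply_le (single m c) m

end ZeroAtInftyContinuousMap

section

variable {𝕜 : Type*} [RCLike 𝕜] {E F : Type*} [NormedAddCommGroup E] [NormedSpace 𝕜 E]
  [NormedAddCommGroup F] [NormedSpace 𝕜 F]

variable (𝕜) in
def UpperEstimate {ι : Type*} (v : ι → E) (M : ℝ) : Prop :=
  ∀ (s : Finset ι) (a : ι → 𝕜), (∀ i ∈ s, ‖a i‖ ≤ 1) → ‖∑ i ∈ s, a i • v i‖ ≤ M

namespace UpperEstimate

section General

variable {ι κ : Type*} {v : ι → E} {M : ℝ}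

theorem nonneg (hv : UpperEstimate 𝕜 v M) : 0 ≤ M := by
  simpa using hv ∅ 0 (by simp)

theorem norm_sum_le (hv : UpperEstimate 𝕜 v M) (s : Finset ι) (a : ι → 𝕜) {B : ℝ} (hB : 0 ≤ B)
    (ha : ∀ i ∈ s, ‖a i‖ ≤ B) : ‖∑ i ∈ s, a i • v i‖ ≤ M * B := by
  rcases hB.eq_or_lt with rfl | hB
  · rw [mul_zero, norm_le_zero_iff]
    exact Finset.sum_eq_zero fun i hi => by rw [norm_le_zero_iff.1 (ha i hi), zero_smul]
  have hB' : (B : 𝕜) ≠ 0 := RCLike.ofReal_ne_zero.2 hB.ne'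
  have hsum : ∑ i ∈ s, a i • v i = (B : 𝕜) • ∑ i ∈ s, ((B : 𝕜)⁻¹ * a i) • v i := by
    simp only [Finset.smul_sum, smul_smul, mul_inv_cancel_left₀ hB']
  have hle : ∀ i ∈ s, ‖(B : 𝕜)⁻¹ * a i‖ ≤ 1 := fun i hi => by
    rw [norm_mul, norm_inv, RCLike.norm_ofReal, abs_of_pos hB, inv_mul_le_iff₀ hB, mul_one]
    exact ha i hi
  rw [hsum, norm_smul, RCLike.norm_ofReal, abs_of_pos hB, mul_comm]
  exact mul_le_mul_of_nonneg_right (hv s _ hle) hB.le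

theorem const_smul (hv : UpperEstimate 𝕜 v M) (c : 𝕜) :
    UpperEstimate 𝕜 (fun i => c • v i) (‖c‖ * M) := fun s a ha => by
  simp_rw [smul_comm _ c, ← Finset.smul_sum, norm_smul]
  exact mul_le_mul_of_nonneg_left (hv s a ha) (norm_nonneg c)

theorem comp_injective (hv : UpperEstimate 𝕜 v M) {σ : κ → ι} (hσ : σ.Injective) :
    UpperEstimate 𝕜 (v ∘ σ) M := fun s a ha => by
  classical
  have := hv (s.map ⟨σ, hσ⟩) (Function.extend σ a 0) (by simpa [hσ.extend_apply] using ha)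
  simpa [hσ.extend_apply] using this

theorem sub_of_sumElim {u w : κ → E} (h : UpperEstimate 𝕜 (Sum.elim u w) M) :
    UpperEstimate 𝕜 (fun i => u i - w i) M := fun s a ha => by
  have := h (s.disjSum s) (Sum.elim a (-a)) (by simpa using ha)
  simpa [Finset.sum_disjSum, smul_sub, ← sub_eq_add_neg, Finset.sum_sub_distrib] using this

theorem pairwise_sub (hv : UpperEstimate 𝕜 v M) {σ : ℕ → ι} (hσ : σ.Injective) :
    UpperEstimate 𝕜 (fun k => v (σ (2 * k)) - v (σ (2 * k + 1))) M := by
  have h := hv.comp_injective (hσ.comp Equiv.natSumNatEquivNat.injective)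
  have heq : v ∘ σ ∘ Equiv.natSumNatEquivNat =
      Sum.elim (fun k => v (σ (2 * k))) (fun k => v (σ (2 * k + 1))) := by
    ext (k | k) <;> simp [Equiv.natSumNatEquivNat_apply]
  exact (heq ▸ h).sub_of_sumElim

theorem of_antilipschitz (T : E →L[𝕜] F) {K : NNReal} (hT : AntilipschitzWith K T)
    (hv : UpperEstimate 𝕜 (fun i => T (v i)) M) : UpperEstimate 𝕜 v (K * M) := fun s a ha => by
  calc ‖∑ i ∈ s, a i • v i‖ ≤ K * ‖T (∑ i ∈ s, a i • v i)‖ := T.bound_of_antilipschitz hT _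
    _ ≤ K * M := by
      gcongr
      simpa only [map_sum, map_smul] using hv s a ha

theorem sub_le_norm_sum {μ : ℝ} (hv : UpperEstimate 𝕜 v M) (hμ : ∀ i, μ ≤ ‖v i‖) {s : Finset ι}
    {a : ι → 𝕜} (ha : ∀ j ∈ s, ‖a j‖ ≤ 1) {i : ι} (hi : i ∈ s) (hai : a i = 1) :
    2 * μ - M ≤ ‖∑ j ∈ s, a j • v j‖ := by
  classical
  set w := ∑ j ∈ s.erase i, a j • v j
  have hsum : ∑ j ∈ s, a j • v j = v i + w := by
    rw [← Finset.add_sum_erase s _ hi, hai, one_smul]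
  -- flipping the signs of all coefficients but the `i`-th keeps them in the unit ball
  have hdiff : ‖v i - w‖ ≤ M := by
    have h := hv s (Function.update (-a) i 1) fun j hj => by
      rcases eq_or_ne j i with rfl | hji
      · simp
      · simpa [hji] using ha j hj
    rw [← Finset.add_sum_erase s _ hi] at h
    convert h using 2
    rw [Function.update_self, one_smul, sub_eq_add_neg, ← Finset.sum_neg_distrib]
    congr 1
    refine Finset.sum_congr rfl fun j hj => ?_
    rw [Function.update_of_ne (Finset.ne_of_mem_erase hj), Pi.neg_apply, neg_smul]
  have h2 : 2 * ‖v i‖ ≤ ‖v i + w‖ + ‖v i - w‖ :=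
    calc 2 * ‖v i‖ = ‖(v i + w) + (v i - w)‖ := by
          rw [add_add_sub_cancel, ← two_smul 𝕜, norm_smul, RCLike.norm_two]
      _ ≤ ‖v i + w‖ + ‖v i - w‖ := norm_add_le _ _
  rw [hsum]
  linarith [hμ i]

theorem norm_mul_le_norm_sum {μ : ℝ} (hv : UpperEstimate 𝕜 v M) (hμ : ∀ i, μ ≤ ‖v i‖)
    (s : Finset ι) (a : ι → 𝕜) {i : ι} (hi : i ∈ s) :
    ‖a i‖ * (2 * μ - M) ≤ ‖∑ j ∈ s, a j • v j‖ := by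
  obtain ⟨m, hm, hmax⟩ := s.exists_max_image (fun j => ‖a j‖) ⟨i, hi⟩
  rcases le_or_gt (2 * μ - M) 0 with hneg | hpos
  · exact (mul_nonpos_of_nonneg_of_nonpos (norm_nonneg _) hneg).trans (norm_nonneg _)
  rcases eq_or_ne (a m) 0 with ham | ham
  · have : a i = 0 := norm_le_zero_iff.1 (by simpa [ham] using hmax i hi)
    simp [this]
  have hnorm : 0 < ‖a m‖ := norm_pos_iff.2 ham
  have key := hv.sub_le_norm_sum hμ (s := s) (a := fun j => (a m)⁻¹ * a j)
    (fun j hj => by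
      rw [norm_mul, norm_inv, inv_mul_le_iff₀ hnorm, mul_one]
      exact hmax j hj) hm (inv_mul_cancel₀ ham)
  simp_rw [mul_smul, ← Finset.smul_sum, norm_smul, norm_inv] at key
  calc ‖a i‖ * (2 * μ - M) ≤ ‖a m‖ * (2 * μ - M) := by gcongr; exact hmax i hi
    _ ≤ ‖a m‖ * (‖a m‖⁻¹ * ‖∑ j ∈ s, a j • v j‖) := by gcongr
    _ = ‖∑ j ∈ s, a j • v j‖ := by field_simp

end General

section Synthesis

variable {v : ℕ → E} {M : ℝ}

theorem summable [CompleteSpace E] (hv : UpperEstimate 𝕜 v M) {a : ℕ → 𝕜}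
    (ha : Tendsto a atTop (nhds 0)) : Summable fun k => a k • v k := by
  rw [summable_iff_vanishing_norm]
  intro ε hε
  have hM := hv.nonneg
  have hδ : 0 < ε / (M + 1) := by positivity
  obtain ⟨N, hN⟩ := eventually_atTop.1 ((NormedAddGroup.tendsto_nhds_zero.1 ha) _ hδ)
  refine ⟨Finset.range N, fun t ht => ?_⟩
  have hsmall : ∀ k ∈ t, ‖a k‖ ≤ ε / (M + 1) := fun k hk =>
    (hN k (not_lt.1 fun hkN => Finset.disjoint_left.1 ht hk (Finset.mem_range.2 hkN))).le
  calc ‖∑ k ∈ t, a k • v k‖ ≤ M * (ε / (M + 1)) := hv.norm_sum_le t a hδ.le hsmall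
    _ < ε := by
      rw [mul_div_assoc', div_lt_iff₀ (by linarith)]
      nlinarith

theorem norm_le_of_hasSum (hv : UpperEstimate 𝕜 v M) (a : C₀(ℕ, 𝕜)) {w : E}
    (h : HasSum (fun k => a k • v k) w) : ‖w‖ ≤ M * ‖a‖ :=
  le_of_tendsto' ((continuous_norm.tendsto w).comp h) fun t =>
    hv.norm_sum_le t a (norm_nonneg a) fun k _ => a.norm_apply_le k

variable [CompleteSpace E]

noncomputable def synthesis (hv : UpperEstimate 𝕜 v M) : C₀(ℕ, 𝕜) →L[𝕜] E :=
  LinearMap.mkContinuous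
    { toFun := fun a => ∑' k, a k • v k
      map_add' := fun a b => by
        simp only [ZeroAtInftyContinuousMap.add_apply, add_smul]
        exact (hv.summable a.tendsto_atTop).tsum_add (hv.summable b.tendsto_atTop)
      map_smul' := fun c a => by
        simp only [ZeroAtInftyContinuousMap.smul_apply, smul_eq_mul, mul_smul, RingHom.id_apply]
        exact (hv.summable a.tendsto_atTop).tsum_const_smul c }
    M fun a => hv.norm_le_of_hasSum a (hv.summable a.tendsto_atTop).hasSum

theorem hasSum_synthesis (hv : UpperEstimate 𝕜 v M) (a : C₀(ℕ, 𝕜)) :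
    HasSum (fun k => a k • v k) (hv.synthesis a) :=
  (hv.summable a.tendsto_atTop).hasSum

end Synthesis

end UpperEstimate

noncomputable def c0Analysis (h : ℕ → E →L[𝕜] 𝕜)
    (hh : ∀ w, Tendsto (fun k => h k w) atTop (nhds 0)) {B : ℝ} (hB : ∀ k, ‖h k‖ ≤ B) :
    E →L[𝕜] C₀(ℕ, 𝕜) :=
  LinearMap.mkContinuous
    { toFun := fun w => .ofTendstoAtTop (fun k => h k w) (hh w)
      map_add' := fun u w => by ext k; simp
      map_smul' := fun c w => by ext k; simp }
    B fun w => (ZeroAtInftyContinuousMap.norm_le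
      (mul_nonneg ((norm_nonneg (h 0)).trans (hB 0)) (norm_nonneg w))).2
        fun k => ((h k).le_opNorm w).trans (by gcongr; exact hB k)

theorem norm_c0Analysis_le (h : ℕ → E →L[𝕜] 𝕜)
    (hh : ∀ w, Tendsto (fun k => h k w) atTop (nhds 0)) {B : ℝ} (hB : ∀ k, ‖h k‖ ≤ B) :
    ‖c0Analysis h hh hB‖ ≤ B :=
  LinearMap.mkContinuous_norm_le _ ((norm_nonneg (h 0)).trans (hB 0)) _

theorem exists_biorthogonal_of_norm_le_norm_sum {ι : Type*} [DecidableEq ι] (y : ι → E)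
    (hy : ∀ (s : Finset ι) (a : ι → 𝕜), ∀ i ∈ s, ‖a i‖ ≤ ‖∑ j ∈ s, a j • y j‖) :
    ∃ f : ι → E →L[𝕜] 𝕜, (∀ i, ‖f i‖ ≤ 1) ∧ ∀ i j, f i (y j) = if j = i then 1 else 0 := by
  have hc : ∀ (c : ι →₀ 𝕜) i, ‖c i‖ ≤ ‖Finsupp.linearCombination 𝕜 y c‖ := fun c i => by
    by_cases hi : i ∈ c.support
    · simpa [Finsupp.linearCombination_apply, Finsupp.sum] using hy c.support c i hi
    · simp [Finsupp.notMem_support_iff.1 hi]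
  have hli : LinearIndependent 𝕜 y := linearIndependent_iff.2 fun c hc0 =>
    Finsupp.ext fun i => norm_le_zero_iff.1 (by simpa [hc0] using hc c i)
  have hcoord : ∀ i, ∃ f : E →L[𝕜] 𝕜, ‖f‖ ≤ 1 ∧ ∀ j, f (y j) = if j = i then 1 else 0 := by
    intro i
    let φ : Submodule.span 𝕜 (Set.range y) →L[𝕜] 𝕜 :=
      LinearMap.mkContinuous ((Finsupp.lapply i).comp hli.repr) 1 fun w => by
        simpa [hli.linearCombination_repr w] using hc (hli.repr w) i
    obtain ⟨f, hfφ, hfn⟩ := exists_extension_norm_eq _ φ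
    refine ⟨f, hfn ▸ LinearMap.mkContinuous_norm_le _ zero_le_one _, fun j => ?_⟩
    have hj : y j ∈ Submodule.span 𝕜 (Set.range y) := Submodule.subset_span ⟨j, rfl⟩
    rw [hfφ ⟨y j, hj⟩]
    simp [φ, hli.repr_eq_single j ⟨y j, hj⟩ rfl, Finsupp.single_apply]
  choose f hf1 hfy using hcoord
  exact ⟨f, hf1, hfy⟩

section Complemented

open ContinuousLinearMap

variable {S : F →L[𝕜] E} {U : E →L[𝕜] F}

theorem isClosed_range_of_comp_eq_id (h : U ∘L S = .id 𝕜 F) :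
    IsClosed (LinearMap.range (S : F →ₗ[𝕜] E) : Set E) := by
  rw [LinearMap.coe_range]
  exact Function.LeftInverse.isClosed_range (fun a => congr($h a)) U.continuous S.continuous

theorem exists_projection_of_comp_eq_id (h : U ∘L S = .id 𝕜 F) :
    ∃ P : E →L[𝕜] E, P ∘L P = P ∧ ‖P‖ ≤ ‖S‖ * ‖U‖ ∧
      Set.range P = (LinearMap.range (S : F →ₗ[𝕜] E) : Set E) := by
  refine ⟨S ∘L U, by rw [comp_assoc, ← comp_assoc U, h, id_comp], opNorm_comp_le S U, ?_⟩
  have hU : Function.Surjective U := Function.LeftInverse.surjective (g := S) fun a => congr($h a)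
  rw [coe_comp, hU.range_comp, LinearMap.coe_range, coe_coe]

theorem exists_equiv_range_of_comp_eq_id (h : U ∘L S = .id 𝕜 F) :
    ∃ e : LinearMap.range (S : F →ₗ[𝕜] E) ≃L[𝕜] F,
      ‖(e : LinearMap.range (S : F →ₗ[𝕜] E) →L[𝕜] F)‖ ≤ ‖U‖ ∧
        ‖(e.symm : F →L[𝕜] LinearMap.range (S : F →ₗ[𝕜] E))‖ ≤ ‖S‖ := by
  have hUS : ∀ a, U (S a) = a := fun a => congr($h a)
  refine ⟨.equivOfInverse (U ∘L (LinearMap.range (S : F →ₗ[𝕜] E)).subtypeL)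
    (S.codRestrict _ (LinearMap.mem_range_self (S : F →ₗ[𝕜] E))) (fun z => ?_) hUS, ?_, ?_⟩
  · obtain ⟨a, ha⟩ := z.2
    exact Subtype.ext (by simp [← ha, hUS])
  · exact (opNorm_comp_le _ _).trans (mul_le_of_le_one_right (norm_nonneg U)
      (Submodule.norm_subtypeL_le _))
  · exact opNorm_le_bound _ (norm_nonneg S) fun a => S.le_opNorm a

end Complemented

section James

open Function ZeroAtInftyContinuousMap

theorem norm_sum_smul_le_one_of_disjoint {α ι : Type*} [TopologicalSpace α] {b : ι → C₀(α, 𝕜)}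
    (hb : ∀ k, ‖b k‖ ≤ 1) (hdisj : Pairwise (Disjoint on fun k => support (b k)))
    (s : Finset ι) {a : ι → 𝕜} (ha : ∀ k ∈ s, ‖a k‖ ≤ 1) : ‖∑ k ∈ s, a k • b k‖ ≤ 1 := by
  refine (norm_le zero_le_one).2 fun n => ?_
  simp only [coe_sum, Finset.sum_apply, coe_smul, Pi.smul_apply, smul_eq_mul]
  by_cases h : ∃ k ∈ s, b k n ≠ 0
  · obtain ⟨k, hk, hkn⟩ := h
    rw [Finset.sum_eq_single_of_mem k hk fun l _ hlk => ?_]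
    · rw [norm_mul]
      exact mul_le_one₀ (ha k hk) (norm_nonneg _) ((norm_apply_le _ _).trans (hb k))
    · have : b l n = 0 := notMem_support.1 fun hl =>
        Set.disjoint_left.1 (hdisj hlk) hl (mem_support.2 hkn)
      rw [this, mul_zero]
  · rw [Finset.sum_eq_zero fun k hk => by rw [not_not.1 fun hkn => h ⟨k, hk, hkn⟩, mul_zero],
      norm_zero]
    exact zero_le_one

variable (𝕜) in
def tailBall (m : ℕ) : Set C₀(ℕ, 𝕜) :=
  {b | ‖b‖ ≤ 1 ∧ ∃ N, support b ⊆ Set.Ico m N}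

theorem single_mem_tailBall (m : ℕ) : single m (1 : 𝕜) ∈ tailBall 𝕜 m := by
  refine ⟨by rw [norm_single, norm_one], m + 1, ?_⟩
  rw [coe_single]
  exact Pi.support_single_subset.trans (by simp)

theorem sum_smul_mem_tailBall {m : ℕ} {b : ℕ → C₀(ℕ, 𝕜)} (hb : ∀ k, b k ∈ tailBall 𝕜 m)
    (hdisj : Pairwise (Disjoint on fun k => support (b k))) (s : Finset ℕ)
    {a : ℕ → 𝕜} (ha : ∀ k ∈ s, ‖a k‖ ≤ 1) : ∑ k ∈ s, a k • b k ∈ tailBall 𝕜 m := by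
  choose N hN using fun k => (hb k).2
  refine ⟨norm_sum_smul_le_one_of_disjoint (fun k => (hb k).1) hdisj s ha, s.sup N, fun n hn => ?_⟩
  simp only [mem_support, coe_sum, Finset.sum_apply] at hn
  obtain ⟨k, hk, hkn⟩ := Finset.exists_ne_zero_of_sum_ne_zero hn
  rw [ZeroAtInftyContinuousMap.smul_apply] at hkn
  have hnk := hN k (mem_support.2 (right_ne_zero_of_smul hkn))
  exact ⟨hnk.1, hnk.2.trans_le (Finset.le_sup hk)⟩

noncomputable def tailSup (T : C₀(ℕ, 𝕜) →L[𝕜] E) (m : ℕ) : ℝ :=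
  sSup ((fun b => ‖T b‖) '' tailBall 𝕜 m)

theorem norm_le_tailSup (T : C₀(ℕ, 𝕜) →L[𝕜] E) {m : ℕ} {b : C₀(ℕ, 𝕜)}
    (hb : b ∈ tailBall 𝕜 m) : ‖T b‖ ≤ tailSup T m := by
  refine le_csSup ⟨‖T‖, ?_⟩ (Set.mem_image_of_mem _ hb)
  rintro _ ⟨c, hc, rfl⟩
  simpa using T.le_opNorm_of_le hc.1

theorem exists_lt_norm_of_lt_tailSup {T : C₀(ℕ, 𝕜) →L[𝕜] E} {m : ℕ} {r : ℝ}
    (h : r < tailSup T m) : ∃ b ∈ tailBall 𝕜 m, r < ‖T b‖ := by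
  obtain ⟨_, ⟨b, hb, rfl⟩, hr⟩ :=
    exists_lt_of_lt_csSup ((Set.nonempty_of_mem (single_mem_tailBall m)).image _) h
  exact ⟨b, hb, hr⟩

theorem exists_disjoint_blocks {P : C₀(ℕ, 𝕜) → Prop} (h : ∀ n, ∃ b ∈ tailBall 𝕜 n, P b)
    (m : ℕ) : ∃ b : ℕ → C₀(ℕ, 𝕜), (∀ k, b k ∈ tailBall 𝕜 m ∧ P (b k)) ∧
      Pairwise (Disjoint on fun k => support (b k)) := by
  choose b hb hP using h
  choose N hN using fun n => (hb n).2
  set next : ℕ → ℕ := fun n => max n (N n)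
  set idx : ℕ → ℕ := fun k => next^[k] m
  have hmono : Monotone idx := fun k l hkl =>
    monotone_iterate_of_id_le (fun n => le_max_left n (N n)) hkl m
  have hsupp : ∀ k, support (b (idx k)) ⊆ Set.Ico (idx k) (idx (k + 1)) := fun k =>
    (hN (idx k)).trans <| Set.Ico_subset_Ico_right <| by
      simp only [idx, iterate_succ_apply']
      exact le_max_right _ _
  refine ⟨fun k => b (idx k), fun k => ⟨⟨(hb _).1, idx (k + 1), (hsupp k).trans
    (Set.Ico_subset_Ico_left (hmono (Nat.zero_le k)))⟩, hP _⟩, ?_⟩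
  refine (pairwise_disjoint_on _).2 fun k l hkl =>
    Set.disjoint_of_subset (hsupp k) (hsupp l) (Set.disjoint_left.2 fun n hk hl => ?_)
  have := hmono (show k + 1 ≤ l from hkl)
  simp only [Set.mem_Ico] at hk hl
  omega

theorem exists_blocks_upperEstimate (T : C₀(ℕ, 𝕜) →L[𝕜] E) {K : NNReal}
    (hT : AntilipschitzWith K T) {s : ℝ} (hs₀ : 0 < s) (hs₁ : s < 1) :
    ∃ (b : ℕ → C₀(ℕ, 𝕜)) (M : ℝ), 0 < M ∧ UpperEstimate 𝕜 (fun k => T (b k)) M ∧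
      ∀ k, s * M ≤ ‖T (b k)‖ := by
  have hsingle : ∀ m, 1 ≤ K * ‖T (single m 1)‖ := fun m => by
    simpa [norm_single] using T.bound_of_antilipschitz hT (single m (1 : 𝕜))
  have hK : 0 < (K : ℝ) := K.coe_nonneg.lt_of_ne fun h => by
    linarith [h ▸ hsingle 0, zero_mul ‖T (single 0 (1 : 𝕜))‖]
  have hlow : ∀ m, (K : ℝ)⁻¹ ≤ tailSup T m := fun m =>
    ((inv_le_iff_one_le_mul₀' hK).2 (hsingle m)).trans (norm_le_tailSup T (single_mem_tailBall m))
  have hbdd : BddBelow (Set.range (tailSup T)) := ⟨_, Set.forall_mem_range.2 hlow⟩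
  set ℓ := ⨅ m, tailSup T m
  have hℓ : 0 < ℓ := (inv_pos.2 hK).trans_le (le_ciInf hlow)
  obtain ⟨m₀, hm₀⟩ : ∃ m, tailSup T m < ℓ / s :=
    exists_lt_of_ciInf_lt ((lt_div_iff₀ hs₀).2 (mul_lt_of_lt_one_right hℓ hs₁))
  set M := tailSup T m₀
  have hbig : ∀ n, ∃ b ∈ tailBall 𝕜 n, s * M < ‖T b‖ := fun n =>
    exists_lt_norm_of_lt_tailSup <|
      calc s * M < ℓ := by rwa [lt_div_iff₀' hs₀] at hm₀
        _ ≤ tailSup T n := ciInf_le hbdd n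
  obtain ⟨b, hb, hdisj⟩ := exists_disjoint_blocks hbig m₀
  refine ⟨b, M, hℓ.trans_le (ciInf_le hbdd m₀), fun t a ha => ?_, fun k => (hb k).2.le⟩
  simp_rw [← map_smul, ← map_sum]
  exact norm_le_tailSup T (sum_smul_mem_tailBall (fun k => (hb k).1) hdisj t ha)

theorem exists_upperEstimate_norm_le_norm_sum (T : C₀(ℕ, 𝕜) →L[𝕜] E) {K : NNReal}
    (hT : AntilipschitzWith K T) {C : ℝ} (hC : 1 < C) :
    ∃ x : ℕ → C₀(ℕ, 𝕜), UpperEstimate 𝕜 (fun k => T (x k)) C ∧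
      ∀ (s : Finset ℕ) (a : ℕ → 𝕜), ∀ n ∈ s, ‖a n‖ ≤ ‖∑ k ∈ s, a k • T (x k)‖ := by
  have hC₀ : 0 < C := by linarith
  -- with `s = (C + 1) / (2C)` the lower constant `2sM - M` is `M / C`
  obtain ⟨b, M, hM, hup, hlow⟩ := exists_blocks_upperEstimate T hT (s := (C + 1) / (2 * C))
    (by positivity) (by rw [div_lt_one (by positivity)]; linarith)
  set c : 𝕜 := ((C / M : ℝ) : 𝕜)
  have hc : ‖c‖ = C / M := by
    rw [RCLike.norm_ofReal, abs_of_pos (by positivity)]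
  refine ⟨fun k => c • b k, ?_, fun s a n hn => ?_⟩
  · simpa only [map_smul, hc, div_mul_cancel₀ _ hM.ne'] using hup.const_smul c
  · have key := hup.norm_mul_le_norm_sum hlow s a hn
    have h2 : 2 * ((C + 1) / (2 * C) * M) - M = M / C := by field_simp; ring
    rw [h2] at key
    simp_rw [map_smul, smul_comm _ c, ← Finset.smul_sum, norm_smul, hc]
    calc ‖a n‖ = C / M * (‖a n‖ * (M / C)) := by field_simp
      _ ≤ C / M * ‖∑ k ∈ s, a k • T (b k)‖ := by gcongr

end James

theorem exists_comp_comp_eq_id_of_antilipschitz (T : C₀(ℕ, 𝕜) →L[𝕜] E) {K : NNReal}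
    (hT : AntilipschitzWith K T)
    (hE : ∀ g : ℕ → E →L[𝕜] 𝕜, (∀ n, ‖g n‖ ≤ 1) → ∃ ρ : ℕ → ℕ, StrictMono ρ ∧
      ∀ y, ∃ l, Tendsto (fun n => g (ρ n) y) atTop (nhds l))
    {C : ℝ} (hC : 1 < C) :
    ∃ (B : C₀(ℕ, 𝕜) →L[𝕜] C₀(ℕ, 𝕜)) (U : E →L[𝕜] C₀(ℕ, 𝕜)),
      U ∘L T ∘L B = .id 𝕜 _ ∧ ‖U‖ ≤ 1 ∧ ‖T ∘L B‖ ≤ C := by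
  obtain ⟨x, hup, hlow⟩ := exists_upperEstimate_norm_le_norm_sum T hT hC
  obtain ⟨f, hf1, hfx⟩ := exists_biorthogonal_of_norm_le_norm_sum _ hlow
  obtain ⟨ρ, hρ, hlim⟩ := hE f hf1
  set β : ℕ → C₀(ℕ, 𝕜) := fun k => x (ρ (2 * k)) - x (ρ (2 * k + 1))
  set h : ℕ → E →L[𝕜] 𝕜 := fun k => (2 : 𝕜)⁻¹ • (f (ρ (2 * k)) - f (ρ (2 * k + 1)))
  have hβ : UpperEstimate 𝕜 (fun k => T (β k)) C := by
    simpa only [β, map_sub] using hup.pairwise_sub hρ.injective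
  have hh1 : ∀ k, ‖h k‖ ≤ 1 := fun k => by
    rw [norm_smul, norm_inv, RCLike.norm_two]
    linarith [norm_sub_le (f (ρ (2 * k))) (f (ρ (2 * k + 1))), hf1 (ρ (2 * k)),
      hf1 (ρ (2 * k + 1))]
  have hnull : ∀ w, Tendsto (fun k => h k w) atTop (nhds 0) := fun w => by
    obtain ⟨l, hl⟩ := hlim w
    have h2 : Tendsto (fun k : ℕ => 2 * k) atTop atTop := tendsto_id.const_mul_atTop' two_pos
    have := ((hl.comp h2).sub (hl.comp ((tendsto_add_atTop_nat 1).comp h2))).const_smul (2 : 𝕜)⁻¹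
    simpa [h] using this
  have hhβ : ∀ j k, h j (T (β k)) = if k = j then 1 else 0 := fun j k => by
    simp only [h, β, map_sub, smul_apply, sub_apply, hfx, hρ.injective.eq_iff]
    by_cases hkj : k = j
    · norm_num [hkj]
    · simp [hkj, show 2 * k + 1 ≠ 2 * j by omega, show 2 * k ≠ 2 * j + 1 by omega]
  have hB := hβ.of_antilipschitz T hT
  have hS : ∀ a, HasSum (fun k => a k • T (β k)) (T (hB.synthesis a)) := fun a => by
    simpa using (hB.hasSum_synthesis a).mapL T
  refine ⟨hB.synthesis, c0Analysis h hnull hh1, ?_, norm_c0Analysis_le h hnull hh1,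
    ContinuousLinearMap.opNorm_le_bound _ (by linarith) fun a => hβ.norm_le_of_hasSum a (hS a)⟩
  ext a k
  have := (hS a).mapL (h k)
  simp only [map_smul, hhβ, smul_eq_mul, mul_ite, mul_one, mul_zero] at this
  have hsingle : HasSum (fun b => if b = k then a b else 0) (a k) := by
    simpa using hasSum_single (f := fun b => if b = k then a b else 0) k fun b hb => if_neg hb
  exact this.unique hsingle

end

theorem statement13_general {𝕜 : Type*} [RCLike 𝕜]
    {X : Type*} [NormedAddCommGroup X] [NormedSpace 𝕜 X]
    {Y : Type*} [NormedAddCommGroup Y] [NormedSpace 𝕜 Y]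
    (hX : ∃ W : Submodule 𝕜 X, IsClosed (W : Set X) ∧ Nonempty (↥W ≃L[𝕜] C₀(ℕ, 𝕜)))
    (hY : ∀ g : ℕ → (Y →L[𝕜] 𝕜), (∀ n, ‖g n‖ ≤ 1) →
      ∃ ρ : ℕ → ℕ, StrictMono ρ ∧ ∃ g₀ : Y →L[𝕜] 𝕜, ‖g₀‖ ≤ 1 ∧
        ∀ y : Y, Tendsto (fun n => g (ρ n) y) atTop (nhds (g₀ y)))
    (R : X →L[𝕜] Y) (η : ℝ) (hη : 0 < η) (hR : ∀ x : X, η * ‖x‖ ≤ ‖R x‖)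
    (C : ℝ) (hC : 1 < C) :
    (∃ Z : Submodule 𝕜 Y, (Z : Set Y) ⊆ Set.range ⇑R ∧ IsClosed (Z : Set Y) ∧
        (∃ P : Y →L[𝕜] Y, P ∘L P = P ∧ ‖P‖ ≤ C ∧ Set.range ⇑P = (Z : Set Y)) ∧
        ∃ e : ↥Z ≃L[𝕜] C₀(ℕ, 𝕜),
          ‖(e : ↥Z →L[𝕜] C₀(ℕ, 𝕜))‖ * ‖(e.symm : C₀(ℕ, 𝕜) →L[𝕜] ↥Z)‖ ≤ C) ∧
      ∃ (U : Y →L[𝕜] C₀(ℕ, 𝕜)) (V : C₀(ℕ, 𝕜) →L[𝕜] X),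
        U ∘L R ∘L V = ContinuousLinearMap.id 𝕜 (C₀(ℕ, 𝕜)) ∧ ‖U‖ * ‖V‖ ≤ C ^ 2 / η := by
  obtain ⟨W, -, ⟨φ⟩⟩ := hX
  let ψ : C₀(ℕ, 𝕜) →L[𝕜] X := W.subtypeL ∘L (φ.symm : C₀(ℕ, 𝕜) →L[𝕜] W)
  have hRanti : AntilipschitzWith ⟨η⁻¹, by positivity⟩ R :=
    R.antilipschitz_of_bound fun x => (le_inv_mul_iff₀ hη).2 (hR x)
  have hT : AntilipschitzWith _ (R ∘L ψ) :=
    hRanti.comp (isometry_subtype_coe.antilipschitz.comp φ.symm.antilipschitz)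
  obtain ⟨B, U, hUTB, hU, hS⟩ := exists_comp_comp_eq_id_of_antilipschitz (R ∘L ψ) hT
    (fun g hg => have ⟨ρ, hρ, g₀, _, hlim⟩ := hY g hg; ⟨ρ, hρ, fun y => ⟨g₀ y, hlim y⟩⟩) hC
  obtain ⟨P, hPP, hP, hPrange⟩ := exists_projection_of_comp_eq_id hUTB
  obtain ⟨e, he, he'⟩ := exists_equiv_range_of_comp_eq_id hUTB
  have hV : ‖ψ ∘L B‖ ≤ C / η := ContinuousLinearMap.opNorm_le_bound _ (by positivity) fun a => by
    rw [div_mul_eq_mul_div, le_div_iff₀ hη, mul_comm]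
    exact (hR _).trans (((R ∘L ψ) ∘L B).le_opNorm a |>.trans (by gcongr))
  refine ⟨⟨_, fun y hy => ?_, isClosed_range_of_comp_eq_id hUTB,
    ⟨P, hPP, hP.trans (by nlinarith [norm_nonneg ((R ∘L ψ) ∘L B)]), hPrange⟩, e,
    (mul_le_mul he he' (norm_nonneg _) (norm_nonneg U)).trans (by nlinarith [norm_nonneg U])⟩,
    U, ψ ∘L B, hUTB, ?_⟩
  · obtain ⟨a, rfl⟩ := LinearMap.mem_range.1 hy
    exact ⟨ψ (B a), rfl⟩
  calc ‖U‖ * ‖ψ ∘L B‖ ≤ 1 * (C / η) := by gcongr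
    _ ≤ C ^ 2 / η := by rw [one_mul]; gcongr; nlinarith

/-- Let `X`, `Y` be Banach spaces, where `X` contains a closed subspace
isomorphic to `c₀` and the dual unit ball of `Y` is weak* sequentially compact, and let
`R : X → Y` be bounded below by `η > 0`. Then for every `C > 1`, the range of `R` contains
a closed subspace `Z` which is `C`-complemented in `Y` and `C`-isomorphic to `c₀`, and
there are operators `U : Y → c₀`, `V : c₀ → X` with `U ∘ R ∘ V = I_{c₀}` and
`‖U‖·‖V‖ ≤ C²/η`. -/
theorem statement13 {𝕜 : Type*} [RCLike 𝕜]
    {X : Type*} [NormedAddCommGroup X] [NormedSpace 𝕜 X] [CompleteSpace X]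
    {Y : Type*} [NormedAddCommGroup Y] [NormedSpace 𝕜 Y] [CompleteSpace Y]
    (hX : ∃ W : Submodule 𝕜 X, IsClosed (W : Set X) ∧ Nonempty (↥W ≃L[𝕜] C₀(ℕ, 𝕜)))
    (hY : ∀ g : ℕ → (Y →L[𝕜] 𝕜), (∀ n, ‖g n‖ ≤ 1) →
      ∃ ρ : ℕ → ℕ, StrictMono ρ ∧ ∃ g₀ : Y →L[𝕜] 𝕜, ‖g₀‖ ≤ 1 ∧
        ∀ y : Y, Tendsto (fun n => g (ρ n) y) atTop (nhds (g₀ y)))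
    (R : X →L[𝕜] Y) (η : ℝ) (hη : 0 < η) (hR : ∀ x : X, η * ‖x‖ ≤ ‖R x‖)
    (C : ℝ) (hC : 1 < C) :
    (∃ Z : Submodule 𝕜 Y, (Z : Set Y) ⊆ Set.range ⇑R ∧ IsClosed (Z : Set Y) ∧
        (∃ P : Y →L[𝕜] Y, P ∘L P = P ∧ ‖P‖ ≤ C ∧ Set.range ⇑P = (Z : Set Y)) ∧
        ∃ e : ↥Z ≃L[𝕜] C₀(ℕ, 𝕜),
          ‖(e : ↥Z →L[𝕜] C₀(ℕ, 𝕜))‖ * ‖(e.symm : C₀(ℕ, 𝕜) →L[𝕜] ↥Z)‖ ≤ C) ∧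
      ∃ (U : Y →L[𝕜] C₀(ℕ, 𝕜)) (V : C₀(ℕ, 𝕜) →L[𝕜] X),
        U ∘L R ∘L V = ContinuousLinearMap.id 𝕜 (C₀(ℕ, 𝕜)) ∧ ‖U‖ * ‖V‖ ≤ C ^ 2 / η :=
  statement13_general hX hY R η hη hR C hC
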